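/- Suppose every layer of an L-layer feedforward network is replaced by its non-negative isomorphic (absolute-value weights, reflected inputs, shifted biases, shifted activations) with layer-k shift parameter a^(k) = g_max. Then the network output at the final layer equals the original network's output for every input x ∈ [0, a^(1)]^{M}, by induction on layers. -/
import Mathlib


/-- Forward pass of an original feedforward network: layer k maps dimension d k to
dimension d (k+1), with weights W, biases b and activation g. -/
def forward (d : ℕ → ℕ) (W : ∀ k, Fin (d (k + 1)) → Fin (d k) → ℝ)
    (b : ∀ k, Fin (d (k + 1)) → ℝ) (g : ℝ → ℝ) (x : Fin (d 0) → ℝ) :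
    ∀ k : ℕ, Fin (d k) → ℝ
  | 0 => x
  | k + 1 => fun i =>
      g ((∑ j, W k i j * forward d W b g x k j) + b k i)

/-- Forward pass of the non-negative isomorphic network: absolute-value weights,
inputs reflected (per neuron, for negative-weight coordinates) with layer shift
parameter a k, biases adjusted and shifted by c k, and activation shifted by c k. -/
noncomputable def forwardT (d : ℕ → ℕ) (W : ∀ k, Fin (d (k + 1)) → Fin (d k) → ℝ)
    (b : ∀ k, Fin (d (k + 1)) → ℝ) (g : ℝ → ℝ) (a : ℕ → ℝ) (c : ℕ → ℝ)
    (x : Fin (d 0) → ℝ) : ∀ k : ℕ, Fin (d k) → ℝ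
  | 0 => x
  | k + 1 => fun i =>
      g (((∑ j, |W k i j| *
              (if W k i j < 0 then a k - forwardT d W b g a c x k j
               else forwardT d W b g a c x k j)) +
          (b k i - a k * (∑ j ∈ Finset.univ.filter (fun j => W k i j < 0), |W k i j|)
            + c k)) - c k)

/-- Replacing every layer of an L-layer feedforward network by its non-negative
isomorphic (with shift parameter g_max for all hidden layers) leaves the network
output unchanged on all inputs x ∈ [0, a 0]^M. -/
theorem nonneg_isomorphic_network (L : ℕ) (d : ℕ → ℕ)
    (W : ∀ k, Fin (d (k + 1)) → Fin (d k) → ℝ)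
    (b : ∀ k, Fin (d (k + 1)) → ℝ)
    (g : ℝ → ℝ) (gmin gmax : ℝ) (hgmin : 0 ≤ gmin) (hgm : gmin < gmax)
    (hg : ∀ t : ℝ, g t ∈ Set.Icc gmin gmax)
    (a : ℕ → ℝ) (ha0 : 0 < a 0) (ha : ∀ k, a (k + 1) = gmax) (c : ℕ → ℝ)
    (x : Fin (d 0) → ℝ) (hx : ∀ j, x j ∈ Set.Icc (0 : ℝ) (a 0)) :
    ∀ i : Fin (d L), forwardT d W b g a c x L i = forward d W b g x L i := by
  induction L with
  | zero => intro i; rfl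
  | succ k ih =>
    intro i
    simp only [forwardT, forward]
    congr 1
    have hrw : ∀ j, forwardT d W b g a c x k j = forward d W b g x k j := ih
    simp only [hrw]
    rw [Finset.mul_sum, Finset.sum_filter]
    have : (∑ j, (|W k i j| *
        (if W k i j < 0 then a k - forward d W b g x k j else forward d W b g x k j)
        - if W k i j < 0 then a k * |W k i j| else 0))
        = ∑ j, W k i j * forward d W b g x k j := by
      refine Finset.sum_congr rfl fun j _ => ?_
      by_cases h : W k i j < 0
      · simp only [h, if_true, abs_of_neg h]; ring
      · simp only [h, if_false, abs_of_nonneg (not_lt.mp h)]; ring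
    rw [← this, Finset.sum_sub_distrib]; ring
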